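/- arXiv:0802.2626 — 8 statements merged into one kernel-verified Lean document; each statement's English description precedes it below -/
import Mathlib

section
/- Let N ≥ 1 and let U ⊆ ℝ^N be open. Let a, b, c : U → ℝ and μ¹, …, μ^N, λ¹, …, λ^N : U → ℝ be C¹ functions such that for every index i and every point of U one has ∂_i b = μ^i ∂_i a and ∂_i c = λ^i ∂_i a (here ∂_i denotes the partial derivative in the i-th coordinate R^i of U). Let f₁₁, f₂₂, f₃₃, f₁₂, f₁₃, f₂₃ : ℝ³ → ℝ be functions such that for every R ∈ U and every i the dispersion relation f₁₁ + f₂₂ (μ^i)² + f₃₃ (λ^i)² + 2 f₁₂ μ^i + 2 f₁₃ λ^i + 2 f₂₃ μ^i λ^i = 0 holds, where μ^i, λ^i are evaluated at R and the f's are evaluated at (a(R), b(R), c(R)). Let Ω ⊆ ℝ³ be open (with coordinates x, y, t) and let R = (R¹, …, R^N) : Ω → U be C¹ with R^i_y = μ^i(R) R^i_x and R^i_t = λ^i(R) R^i_x on Ω for every i. Then the functions A = a∘R, B = b∘R, C = c∘R satisfy on Ω: A_y = B_x, A_t = C_x, B_t = C_y, and f₁₁(A,B,C) A_x + f₂₂(A,B,C)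 B_y + f₃₃(A,B,C) C_t + 2 f₁₂(A,B,C) A_y + 2 f₁₃(A,B,C) A_t + 2 f₂₃(A,B,C) B_t = 0. -/
/-! By the chain rule every derivative of `g ∘ R`, for `g` one of `a, b, c`, is a sum over the
Riemann invariants `Rⁱ` of `Rⁱ_k · ∂ᵢ g`. The characteristic equations `Rⁱ_y = μⁱ Rⁱ_x`,
`Rⁱ_t = λⁱ Rⁱ_x` and the relations `∂ᵢ b = μⁱ ∂ᵢ a`, `∂ᵢ c = λⁱ ∂ᵢ a` turn every summand into
`Rⁱ_x ∂ᵢ a` times a monomial in `μⁱ, λⁱ`. The compatibility conditions then hold termwise, and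
the second-order equation is the sum over `i` of `Rⁱ_x ∂ᵢ a` times the dispersion relation. -/

/-- Partial derivative of `f : ℝⁿ → ℝ` in the `i`-th coordinate direction. -/
noncomputable def pd {n : ℕ} (i : Fin n) (f : (Fin n → ℝ) → ℝ) (x : Fin n → ℝ) : ℝ :=
  fderiv ℝ f x (Pi.single i 1)

open Finset

variable {m n : ℕ}

theorem fderiv_apply_eq_sum_pd (g : (Fin n → ℝ) → ℝ) (p v : Fin n → ℝ) :
    fderiv ℝ g p v = ∑ i, v i * pd i g p := by
  conv_lhs => rw [pi_eq_sum_univ' v, map_sum]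
  simp only [map_smul, smul_eq_mul, pd]

theorem pd_apply_eq_fderiv_apply {R : (Fin m → ℝ) → Fin n → ℝ} {X : Fin m → ℝ}
    (hR : DifferentiableAt ℝ R X) (k : Fin m) (i : Fin n) :
    pd k (fun Y => R Y i) X = fderiv ℝ R X (Pi.single k 1) i := by
  rw [pd, fderiv_apply hR]
  rfl

theorem pd_comp_eq_sum {g : (Fin n → ℝ) → ℝ} {R : (Fin m → ℝ) → Fin n → ℝ} {X : Fin m → ℝ}
    (hg : DifferentiableAt ℝ g (R X)) (hR : DifferentiableAt ℝ R X) (k : Fin m) :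
    pd k (g ∘ R) X = ∑ i, pd k (fun Y => R Y i) X * pd i g (R X) := by
  rw [pd, fderiv_comp X hg hR, ContinuousLinearMap.comp_apply, fderiv_apply_eq_sum_pd]
  simp only [pd_apply_eq_fderiv_apply hR]

/-- Coordinates on `ℝ³` are `x = 0`, `y = 1`, `t = 2`. -/
theorem hydrodynamic_reductions_solve_quasilinear_system_general
    {N : ℕ} (U : Set (Fin N → ℝ)) (hU : IsOpen U)
    (a b c : (Fin N → ℝ) → ℝ) (μ lam : Fin N → (Fin N → ℝ) → ℝ)
    (ha : ContDiffOn ℝ 1 a U) (hb : ContDiffOn ℝ 1 b U) (hc : ContDiffOn ℝ 1 c U)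
    (hba : ∀ i : Fin N, ∀ R ∈ U, pd i b R = μ i R * pd i a R)
    (hca : ∀ i : Fin N, ∀ R ∈ U, pd i c R = lam i R * pd i a R)
    (f11 f22 f33 f12 f13 f23 : ℝ → ℝ → ℝ → ℝ)
    (hdisp : ∀ R ∈ U, ∀ i : Fin N,
      f11 (a R) (b R) (c R)
        + f22 (a R) (b R) (c R) * (μ i R) ^ 2
        + f33 (a R) (b R) (c R) * (lam i R) ^ 2
        + 2 * f12 (a R) (b R) (c R) * μ i R
        + 2 * f13 (a R) (b R) (c R) * lam i R
        + 2 * f23 (a R) (b R) (c R) * μ i R * lam i R = 0)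
    (Ω : Set (Fin 3 → ℝ)) (hΩ : IsOpen Ω)
    (R : (Fin 3 → ℝ) → (Fin N → ℝ)) (hR : ContDiffOn ℝ 1 R Ω)
    (hRU : ∀ X ∈ Ω, R X ∈ U)
    (hRy : ∀ i : Fin N, ∀ X ∈ Ω,
      pd 1 (fun Y => R Y i) X = μ i (R X) * pd 0 (fun Y => R Y i) X)
    (hRt : ∀ i : Fin N, ∀ X ∈ Ω,
      pd 2 (fun Y => R Y i) X = lam i (R X) * pd 0 (fun Y => R Y i) X) :
    ∀ X ∈ Ω,
      pd 1 (a ∘ R) X = pd 0 (b ∘ R) X ∧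
      pd 2 (a ∘ R) X = pd 0 (c ∘ R) X ∧
      pd 2 (b ∘ R) X = pd 1 (c ∘ R) X ∧
      f11 (a (R X)) (b (R X)) (c (R X)) * pd 0 (a ∘ R) X
        + f22 (a (R X)) (b (R X)) (c (R X)) * pd 1 (b ∘ R) X
        + f33 (a (R X)) (b (R X)) (c (R X)) * pd 2 (c ∘ R) X
        + 2 * f12 (a (R X)) (b (R X)) (c (R X)) * pd 1 (a ∘ R) X
        + 2 * f13 (a (R X)) (b (R X)) (c (R X)) * pd 2 (a ∘ R) X
        + 2 * f23 (a (R X)) (b (R X)) (c (R X)) * pd 2 (b ∘ R) X = 0 := by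
  intro X hX
  have hXU := hRU X hX
  have hRX : DifferentiableAt ℝ R X := hR.differentiableOn_one.differentiableAt (hΩ.mem_nhds hX)
  have chain (g : (Fin N → ℝ) → ℝ) (hg : ContDiffOn ℝ 1 g U) (k : Fin 3) :=
    pd_comp_eq_sum (hg.differentiableOn_one.differentiableAt (hU.mem_nhds hXU)) hRX k
  simp only [chain a ha, chain b hb, chain c hc, hRy _ X hX, hRt _ X hX, hba _ _ hXU,
    hca _ _ hXU]
  refine ⟨sum_congr rfl fun i _ => by ring, sum_congr rfl fun i _ => by ring,
    sum_congr rfl fun i _ => by ring, ?_⟩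
  simp only [mul_sum, ← sum_add_distrib]
  refine sum_eq_zero fun i _ => ?_
  linear_combination (pd 0 (fun Y => R Y i) X * pd i a (R X)) * hdisp (R X) hXU i

/-- Any N-phase ansatz whose characteristic speeds satisfy the dispersion relation
produces solutions of the quasilinear system equivalent to the second-order PDE
`f₁₁ u_xx + f₂₂ u_yy + f₃₃ u_tt + 2 f₁₂ u_xy + 2 f₁₃ u_xt + 2 f₂₃ u_yt = 0`.
Coordinates on `ℝ³` are `x = 0`, `y = 1`, `t = 2`. -/
theorem hydrodynamic_reductions_solve_quasilinear_system
    {N : ℕ} (hN : 1 ≤ N) (U : Set (Fin N → ℝ)) (hU : IsOpen U)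
    (a b c : (Fin N → ℝ) → ℝ) (μ lam : Fin N → (Fin N → ℝ) → ℝ)
    (ha : ContDiffOn ℝ 1 a U) (hb : ContDiffOn ℝ 1 b U) (hc : ContDiffOn ℝ 1 c U)
    (hμ : ∀ i, ContDiffOn ℝ 1 (μ i) U) (hlam : ∀ i, ContDiffOn ℝ 1 (lam i) U)
    (hba : ∀ i : Fin N, ∀ R ∈ U, pd i b R = μ i R * pd i a R)
    (hca : ∀ i : Fin N, ∀ R ∈ U, pd i c R = lam i R * pd i a R)
    (f11 f22 f33 f12 f13 f23 : ℝ → ℝ → ℝ → ℝ)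
    (hdisp : ∀ R ∈ U, ∀ i : Fin N,
      f11 (a R) (b R) (c R)
        + f22 (a R) (b R) (c R) * (μ i R) ^ 2
        + f33 (a R) (b R) (c R) * (lam i R) ^ 2
        + 2 * f12 (a R) (b R) (c R) * μ i R
        + 2 * f13 (a R) (b R) (c R) * lam i R
        + 2 * f23 (a R) (b R) (c R) * μ i R * lam i R = 0)
    (Ω : Set (Fin 3 → ℝ)) (hΩ : IsOpen Ω)
    (R : (Fin 3 → ℝ) → (Fin N → ℝ)) (hR : ContDiffOn ℝ 1 R Ω)
    (hRU : ∀ X ∈ Ω, R X ∈ U)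
    (hRy : ∀ i : Fin N, ∀ X ∈ Ω,
      pd 1 (fun Y => R Y i) X = μ i (R X) * pd 0 (fun Y => R Y i) X)
    (hRt : ∀ i : Fin N, ∀ X ∈ Ω,
      pd 2 (fun Y => R Y i) X = lam i (R X) * pd 0 (fun Y => R Y i) X) :
    ∀ X ∈ Ω,
      pd 1 (a ∘ R) X = pd 0 (b ∘ R) X ∧
      pd 2 (a ∘ R) X = pd 0 (c ∘ R) X ∧
      pd 2 (b ∘ R) X = pd 1 (c ∘ R) X ∧
      f11 (a (R X)) (b (R X)) (c (R X)) * pd 0 (a ∘ R) X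
        + f22 (a (R X)) (b (R X)) (c (R X)) * pd 1 (b ∘ R) X
        + f33 (a (R X)) (b (R X)) (c (R X)) * pd 2 (c ∘ R) X
        + 2 * f12 (a (R X)) (b (R X)) (c (R X)) * pd 1 (a ∘ R) X
        + 2 * f13 (a (R X)) (b (R X)) (c (R X)) * pd 2 (a ∘ R) X
        + 2 * f23 (a (R X)) (b (R X)) (c (R X)) * pd 2 (b ∘ R) X = 0 :=
  hydrodynamic_reductions_solve_quasilinear_system_general U hU a b c μ lam ha hb hc hba hca f11 f22
    f33 f12 f13 f23 hdisp Ω hΩ R hR hRU hRy hRt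
end

section
/- Let N ≥ 2 and let U ⊆ ℝ^N be open. Let a, b : U → ℝ be C², and let μ¹, …, μ^N : U → ℝ be C¹ functions such that μ^i(R) ≠ μ^j(R) for all i ≠ j and all R ∈ U. Suppose that ∂_i b = μ^i ∂_i a on U for every i, and that ∂_j μ^i = (∂_j a)/(μ^j − μ^i) on U for all i ≠ j. Then ∂_i ∂_j a = 2 (∂_i a)(∂_j a)/(μ^j − μ^i)² on U for all i ≠ j. -/
section PartialDerivatives

variable {n : ℕ} {f g : (Fin n → ℝ) → ℝ} {x : Fin n → ℝ}

theorem pd_congr_of_eventuallyEq (i : Fin n) (h : f =ᶠ[nhds x] g) : pd i f x = pd i g x := by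
  rw [pd, pd, h.fderiv_eq]

theorem pd_mul (i : Fin n) (hf : DifferentiableAt ℝ f x) (hg : DifferentiableAt ℝ g x) :
    pd i (fun y => f y * g y) x = f x * pd i g x + g x * pd i f x := by
  simp [pd, fderiv_fun_mul hf hg]

theorem ContDiffAt.differentiableAt_pd (j : Fin n) (hf : ContDiffAt ℝ 2 f x) :
    DifferentiableAt ℝ (pd j f) x :=
  ((hf.fderiv_right (m := 1) le_rfl).differentiableAt one_ne_zero).clm_apply
    (differentiableAt_const _)

theorem pd_pd_eq_fderiv_fderiv (i j : Fin n) (hf : ContDiffAt ℝ 2 f x) :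
    pd i (pd j f) x = fderiv ℝ (fderiv ℝ f) x (Pi.single i 1) (Pi.single j 1) := by
  have hd : DifferentiableAt ℝ (fderiv ℝ f) x :=
    (hf.fderiv_right (m := 1) le_rfl).differentiableAt one_ne_zero
  change fderiv ℝ (fun y => fderiv ℝ f y (Pi.single j 1)) x (Pi.single i 1) = _
  simp [fderiv_clm_apply hd (differentiableAt_const _)]

theorem pd_pd_comm (i j : Fin n) (hf : ContDiffAt ℝ 2 f x) :
    pd i (pd j f) x = pd j (pd i f) x := by
  rw [pd_pd_eq_fderiv_fderiv i j hf, pd_pd_eq_fderiv_fderiv j i hf]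
  exact hf.isSymmSndFDerivAt (by simp) _ _

end PartialDerivatives

theorem pd_pd_of_pd_eq_mul_pd {n : ℕ} {U : Set (Fin n → ℝ)} {a b m : (Fin n → ℝ) → ℝ}
    {R : Fin n → ℝ} (hR : U ∈ nhds R) (k l : Fin n) (ha : ContDiffAt ℝ 2 a R)
    (hm : DifferentiableAt ℝ m R) (hb : ∀ y ∈ U, pd l b y = m y * pd l a y) :
    pd k (pd l b) R = m R * pd k (pd l a) R + pd l a R * pd k m R :=
  (pd_congr_of_eventuallyEq k (Filter.eventuallyEq_of_mem hR hb)).trans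
    (pd_mul k hm (ha.differentiableAt_pd l))

theorem eq_two_mul_div_sq_of_compat {A ai aj mi mj : ℝ} (hne : mi ≠ mj)
    (h : mj * A + aj * (ai / (mi - mj)) = mi * A + ai * (aj / (mj - mi))) :
    A = 2 * ai * aj / (mj - mi) ^ 2 := by
  have hji : mj - mi ≠ 0 := sub_ne_zero.mpr hne.symm
  have hij : mi - mj ≠ 0 := sub_ne_zero.mpr hne
  field_simp at h ⊢
  apply mul_left_cancel₀ hji
  linear_combination -h

theorem gibbons_tsarev_second_equation_general
    {N : ℕ} (U : Set (Fin N → ℝ)) (hU : IsOpen U)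
    (a b : (Fin N → ℝ) → ℝ) (μ : Fin N → (Fin N → ℝ) → ℝ)
    (ha : ContDiffOn ℝ 2 a U) (hb : ContDiffOn ℝ 2 b U)
    (hμ : ∀ i, ContDiffOn ℝ 1 (μ i) U)
    (hdistinct : ∀ i j : Fin N, i ≠ j → ∀ R ∈ U, μ i R ≠ μ j R)
    (hba : ∀ i : Fin N, ∀ R ∈ U, pd i b R = μ i R * pd i a R)
    (hμa : ∀ i j : Fin N, i ≠ j → ∀ R ∈ U,
      pd j (μ i) R = pd j a R / (μ j R - μ i R)) :
    ∀ i j : Fin N, i ≠ j → ∀ R ∈ U,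
      pd i (pd j a) R = 2 * pd i a R * pd j a R / (μ j R - μ i R) ^ 2 := by
  intro i j hij R hR
  have hRU : U ∈ nhds R := hU.mem_nhds hR
  have haR : ContDiffAt ℝ 2 a R := ha.contDiffAt hRU
  have hμR (k : Fin N) : DifferentiableAt ℝ (μ k) R :=
    ((hμ k).contDiffAt hRU).differentiableAt one_ne_zero
  have hsymm := pd_pd_comm i j (hb.contDiffAt hRU)
  rw [pd_pd_of_pd_eq_mul_pd hRU i j haR (hμR j) (hba j),
    pd_pd_of_pd_eq_mul_pd hRU j i haR (hμR i) (hba i), pd_pd_comm j i haR,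
    hμa j i hij.symm R hR, hμa i j hij R hR] at hsymm
  exact eq_two_mul_div_sq_of_compat (hdistinct i j hij R hR) hsymm

/-- Derivation of the second Gibbons–Tsarev equation: compatibility of
`∂ᵢ b = μⁱ ∂ᵢ a` with `∂ⱼ μⁱ = ∂ⱼ a / (μʲ − μⁱ)` forces
`∂ᵢ∂ⱼ a = 2 ∂ᵢa ∂ⱼa / (μʲ − μⁱ)²` for `i ≠ j`. -/
theorem gibbons_tsarev_second_equation
    {N : ℕ} (hN : 2 ≤ N) (U : Set (Fin N → ℝ)) (hU : IsOpen U)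
    (a b : (Fin N → ℝ) → ℝ) (μ : Fin N → (Fin N → ℝ) → ℝ)
    (ha : ContDiffOn ℝ 2 a U) (hb : ContDiffOn ℝ 2 b U)
    (hμ : ∀ i, ContDiffOn ℝ 1 (μ i) U)
    (hdistinct : ∀ i j : Fin N, i ≠ j → ∀ R ∈ U, μ i R ≠ μ j R)
    (hba : ∀ i : Fin N, ∀ R ∈ U, pd i b R = μ i R * pd i a R)
    (hμa : ∀ i j : Fin N, i ≠ j → ∀ R ∈ U,
      pd j (μ i) R = pd j a R / (μ j R - μ i R)) :
    ∀ i j : Fin N, i ≠ j → ∀ R ∈ U,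
      pd i (pd j a) R = 2 * pd i a R * pd j a R / (μ j R - μ i R) ^ 2 :=
  gibbons_tsarev_second_equation_general U hU a b μ ha hb hμ hdistinct hba hμa
end

section
/- Let f_p, g_p, h_p, f_a, f_b, f_c, g_a, g_b, g_c, h_a, h_b, h_c, k, f₁₁, f₂₂, f₃₃, f₁₂, f₁₃, f₂₃ be real numbers with k ≠ 0, satisfying the six relations: h_a g_p − g_a h_p = k f₁₁; f_b h_p − h_b f_p = k f₂₂; g_c f_p − f_c g_p = k f₃₃; (f_a − g_b) h_p + h_b g_p − h_a f_p = 2 k f₁₂; (h_c − f_a) g_p + g_a f_p − g_c h_p = 2 k f₁₃; (g_b − h_c) f_p + f_c h_p − f_b g_p = 2 k f₂₃. Then f₁₁ f_p² + f₂₂ g_p² + f₃₃ h_p² + 2 f₁₂ f_p g_p + 2 f₁₃ f_p h_p + 2 f₂₃ g_p h_p = 0. -/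
/-- For a parametric dispersionless Lax pair, the six compatibility relations (with
proportionality factor `k ≠ 0`) force the triple `(f_p, g_p, h_p)` to satisfy the
dispersion relation. -/
theorem parametric_lax_pair_dispersion_relation
    (fp gp hp fa fb fc ga gb gc ha hb hc k f11 f22 f33 f12 f13 f23 : ℝ)
    (hk : k ≠ 0)
    (e1 : ha * gp - ga * hp = k * f11)
    (e2 : fb * hp - hb * fp = k * f22)
    (e3 : gc * fp - fc * gp = k * f33)
    (e4 : (fa - gb) * hp + hb * gp - ha * fp = 2 * k * f12)
    (e5 : (hc - fa) * gp + ga * fp - gc * hp = 2 * k * f13)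
    (e6 : (gb - hc) * fp + fc * hp - fb * gp = 2 * k * f23) :
    f11 * fp ^ 2 + f22 * gp ^ 2 + f33 * hp ^ 2
      + 2 * f12 * fp * gp + 2 * f13 * fp * hp + 2 * f23 * gp * hp = 0 := by
  have hq : k * (f11 * fp ^ 2 + f22 * gp ^ 2 + f33 * hp ^ 2
      + 2 * f12 * fp * gp + 2 * f13 * fp * hp + 2 * f23 * gp * hp) = 0 := by
    linear_combination (-fp ^ 2) * e1 + (-gp ^ 2) * e2 + (-hp ^ 2) * e3 + (-(fp * gp)) * e4
      + (-(fp * hp)) * e5 + (-(gp * hp)) * e6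
  exact (mul_eq_zero.mp hq).resolve_left hk
end

section
/- Let F_ξ, G_ξ, F_a, F_b, F_c, G_a, G_b, G_c, k, f₁₁, f₂₂, f₃₃, f₁₂, f₁₃, f₂₃ be real numbers with k ≠ 0, satisfying the six relations: F_ξ G_a − G_ξ F_a = k f₁₁; F_b = k f₂₂; G_c = −k f₃₃; F_a + F_ξ G_b − G_ξ F_b = 2 k f₁₂; G_a + G_ξ F_c − F_ξ G_c = −2 k f₁₃; F_c − G_b = 2 k f₂₃. Then f₁₁ + f₂₂ G_ξ² + f₃₃ F_ξ² + 2 f₁₂ G_ξ + 2 f₁₃ F_ξ + 2 f₂₃ F_ξ G_ξ = 0. -/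
/-- For a dispersionless Lax pair `S_t = F(S_x, u_x, u_y, u_t)`,
`S_y = G(S_x, u_x, u_y, u_t)`, the six relations obtained from the compatibility
condition `S_{ty} = S_{yt}` (with proportionality factor `k ≠ 0`) force the pair of
spectral derivatives `(G_ξ, F_ξ)` to satisfy the dispersion relation. -/
theorem lax_pair_spectral_dispersion_relation
    (Fξ Gξ Fa Fb Fc Ga Gb Gc k f11 f22 f33 f12 f13 f23 : ℝ)
    (hk : k ≠ 0)
    (e1 : Fξ * Ga - Gξ * Fa = k * f11)
    (e2 : Fb = k * f22)
    (e3 : Gc = -(k * f33))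
    (e4 : Fa + Fξ * Gb - Gξ * Fb = 2 * k * f12)
    (e5 : Ga + Gξ * Fc - Fξ * Gc = -(2 * k * f13))
    (e6 : Fc - Gb = 2 * k * f23) :
    f11 + f22 * Gξ ^ 2 + f33 * Fξ ^ 2
      + 2 * f12 * Gξ + 2 * f13 * Fξ + 2 * f23 * Fξ * Gξ = 0 := by
  have h : k * (f11 + f22 * Gξ ^ 2 + f33 * Fξ ^ 2
      + 2 * f12 * Gξ + 2 * f13 * Fξ + 2 * f23 * Fξ * Gξ) = k * 0 := by
    linear_combination -e1 - Gξ^2 * e2 + Fξ^2 * e3 - Gξ * e4 + Fξ * e5 - Fξ * Gξ * e6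
  exact mul_left_cancel₀ hk h
end

section
/- Let I ⊆ ℝ be an open interval, let a₁, a₂, a₃ ∈ ℝ, let k : I → ℝ be a function, and let f, g, h : I → ℝ be differentiable functions satisfying f′ = a₁ k (f − g)(f − h), g′ = a₂ k (g − f)(g − h), h′ = a₃ k (h − f)(h − g) on I. Assume that f(x), g(x), h(x) are pairwise distinct for every x ∈ I. Then the function x ↦ |g(x) − h(x)|^{a₁} · |h(x) − f(x)|^{a₂} · |f(x) − g(x)|^{a₃} is constant on I. -/
/-- The quantity `|g−h|^{a₁} |h−f|^{a₂} |f−g|^{a₃}` is a conservation law of the ODE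
system `f′ = a₁k(f−g)(f−h)`, `g′ = a₂k(g−f)(g−h)`, `h′ = a₃k(h−f)(h−g)` on an open
interval on which `f, g, h` are pairwise distinct. -/
theorem ode_system_conserved_quantity
    (I : Set ℝ) (hIopen : IsOpen I) (hIconv : Convex ℝ I)
    (a1 a2 a3 : ℝ) (k f g h : ℝ → ℝ)
    (hf : ∀ x ∈ I, HasDerivAt f (a1 * k x * (f x - g x) * (f x - h x)) x)
    (hg : ∀ x ∈ I, HasDerivAt g (a2 * k x * (g x - f x) * (g x - h x)) x)
    (hh : ∀ x ∈ I, HasDerivAt h (a3 * k x * (h x - f x) * (h x - g x)) x)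
    (hdist : ∀ x ∈ I, f x ≠ g x ∧ g x ≠ h x ∧ f x ≠ h x) :
    ∀ x ∈ I, ∀ y ∈ I,
      |g x - h x| ^ a1 * |h x - f x| ^ a2 * |f x - g x| ^ a3
        = |g y - h y| ^ a1 * |h y - f y| ^ a2 * |f y - g y| ^ a3 := by
  set F : ℝ → ℝ := fun z => Real.exp (a1 * Real.log (g z - h z)
      + a2 * Real.log (h z - f z) + a3 * Real.log (f z - g z)) with hF
  have key : ∀ x ∈ I, HasDerivAt F 0 x := by
    intro x hx
    obtain ⟨hfg, hgh, hfh⟩ := hdist x hx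
    have hu : g x - h x ≠ 0 := sub_ne_zero.2 hgh
    have hv : h x - f x ≠ 0 := sub_ne_zero.2 (Ne.symm hfh)
    have hw : f x - g x ≠ 0 := sub_ne_zero.2 hfg
    have d1 : HasDerivAt (fun z => Real.log (g z - h z))
        ((a2 * k x * (g x - f x) * (g x - h x) - a3 * k x * (h x - f x) * (h x - g x))
          / (g x - h x)) x := ((hg x hx).sub (hh x hx)).log hu
    have d2 : HasDerivAt (fun z => Real.log (h z - f z))
        ((a3 * k x * (h x - f x) * (h x - g x) - a1 * k x * (f x - g x) * (f x - h x))
          / (h x - f x)) x := ((hh x hx).sub (hf x hx)).log hv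
    have d3 : HasDerivAt (fun z => Real.log (f z - g z))
        ((a1 * k x * (f x - g x) * (f x - h x) - a2 * k x * (g x - f x) * (g x - h x))
          / (f x - g x)) x := ((hf x hx).sub (hg x hx)).log hw
    have dL : HasDerivAt (fun z => a1 * Real.log (g z - h z)
        + a2 * Real.log (h z - f z) + a3 * Real.log (f z - g z))
        (a1 * ((a2 * k x * (g x - f x) * (g x - h x) - a3 * k x * (h x - f x) * (h x - g x))
          / (g x - h x))
         + a2 * ((a3 * k x * (h x - f x) * (h x - g x) - a1 * k x * (f x - g x) * (f x - h x))
          / (h x - f x))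
         + a3 * ((a1 * k x * (f x - g x) * (f x - h x) - a2 * k x * (g x - f x) * (g x - h x))
          / (f x - g x))) x :=
      ((d1.const_mul a1).add (d2.const_mul a2)).add (d3.const_mul a3)
    have hzero : a1 * ((a2 * k x * (g x - f x) * (g x - h x) - a3 * k x * (h x - f x) * (h x - g x))
          / (g x - h x))
         + a2 * ((a3 * k x * (h x - f x) * (h x - g x) - a1 * k x * (f x - g x) * (f x - h x))
          / (h x - f x))
         + a3 * ((a1 * k x * (f x - g x) * (f x - h x) - a2 * k x * (g x - f x) * (g x - h x))
          / (f x - g x)) = 0 := by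
      field_simp
      ring
    rw [hzero] at dL
    have := dL.exp
    simpa using this
  have hconst : ∀ x ∈ I, ∀ y ∈ I, F x = F y := by
    intro x hx y hy
    apply hIconv.is_const_of_fderivWithin_eq_zero (𝕜 := ℝ) (f := F) ?_ ?_ hx hy
    · intro z hz
      exact ((key z hz).differentiableAt).differentiableWithinAt
    · intro z hz
      rw [fderivWithin_of_isOpen hIopen hz, (key z hz).hasFDerivAt.fderiv]
      ext
      simp
  have hval : ∀ z ∈ I, |g z - h z| ^ a1 * |h z - f z| ^ a2 * |f z - g z| ^ a3 = F z := by
    intro z hz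
    obtain ⟨hfg, hgh, hfh⟩ := hdist z hz
    have hu : g z - h z ≠ 0 := sub_ne_zero.2 hgh
    have hv : h z - f z ≠ 0 := sub_ne_zero.2 (Ne.symm hfh)
    have hw : f z - g z ≠ 0 := sub_ne_zero.2 hfg
    have e1 : |g z - h z| ^ a1 = Real.exp (a1 * Real.log (g z - h z)) := by
      rw [Real.rpow_def_of_pos (abs_pos.2 hu), Real.log_abs, mul_comm]
    have e2 : |h z - f z| ^ a2 = Real.exp (a2 * Real.log (h z - f z)) := by
      rw [Real.rpow_def_of_pos (abs_pos.2 hv), Real.log_abs, mul_comm]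
    have e3 : |f z - g z| ^ a3 = Real.exp (a3 * Real.log (f z - g z)) := by
      rw [Real.rpow_def_of_pos (abs_pos.2 hw), Real.log_abs, mul_comm]
    rw [e1, e2, e3, hF, ← Real.exp_add, ← Real.exp_add]
  intro x hx y hy
  rw [hval x hx, hval y hy]
  exact hconst x hx y hy
end

section
/- Let n ≥ 2, let F = (f_{ij}) be a symmetric invertible real n×n matrix with inverse (f^{ij}), and let T = (T_{ijk}) be a real array (1 ≤ i, j, k ≤ n) with T_{ijk} = T_{jik} for all i, j, k. Define A_k = Σ_{i,j} f^{ij} T_{ijk}, B_k = Σ_{i,j} f^{ij} T_{ikj}, s_k = (A_k − n B_k)/((n+2)(1−n)), c_k = ((n+3) A_k − 2(n+1) B_k)/((n+2)(n−1)), and a_{ijk} = T_{ijk} − (c_k + 2 s_k) f_{ij} − s_i f_{kj} − s_j f_{ki}. Then for every k, Σ_{i,j} f^{ij} a_{ijk} = 0 and Σ_{i,j} f^{ij} a_{ikj} = 0. -/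
/-- The apolarity relations `f^{ij} a_{ijk} = 0` and `f^{ij} a_{ikj} = 0` for the
projectively invariant tensor `a_{ijk}` built from a symmetric invertible matrix
`(f_{ij})` and a first-derivative array `T_{ijk} = ∂_k f_{ij}`. -/
theorem apolarity_relations
    {n : ℕ} (hn : 2 ≤ n)
    (F Finv : Matrix (Fin n) (Fin n) ℝ)
    (hFsym : F.IsSymm)
    (hFinv1 : F * Finv = 1) (hFinv2 : Finv * F = 1)
    (T : Fin n → Fin n → Fin n → ℝ)
    (hTsym : ∀ i j k, T i j k = T j i k)
    (A B s c : Fin n → ℝ)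
    (hA : ∀ k, A k = ∑ i, ∑ j, Finv i j * T i j k)
    (hB : ∀ k, B k = ∑ i, ∑ j, Finv i j * T i k j)
    (hs : ∀ k, s k = (A k - (n : ℝ) * B k) / (((n : ℝ) + 2) * (1 - (n : ℝ))))
    (hc : ∀ k, c k = (((n : ℝ) + 3) * A k - 2 * ((n : ℝ) + 1) * B k)
        / (((n : ℝ) + 2) * ((n : ℝ) - 1)))
    (a : Fin n → Fin n → Fin n → ℝ)
    (ha : ∀ i j k, a i j k
        = T i j k - (c k + 2 * s k) * F i j - s i * F k j - s j * F k i) :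
    ∀ k, (∑ i, ∑ j, Finv i j * a i j k = 0) ∧ (∑ i, ∑ j, Finv i j * a i k j = 0) := by
  have hncast : (2:ℝ) ≤ (n:ℝ) := by exact_mod_cast hn
  have hn1 : (1:ℝ) - (n:ℝ) ≠ 0 := by linarith
  have hn2 : (n:ℝ) + 2 ≠ 0 := by linarith
  have hn3 : (n:ℝ) - 1 ≠ 0 := by linarith
  have hF : ∀ i j, F i j = F j i := by
    intro i j
    have := congrArg (fun M => M i j) hFsym
    simpa [Matrix.transpose_apply] using this.symm
  have hd2 : ∀ i m : Fin n, ∑ j, Finv i j * F j m = if i = m then 1 else 0 := by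
    intro i m
    have := congrArg (fun M => M i m) hFinv2
    simpa [Matrix.mul_apply, Matrix.one_apply] using this
  have hd1 : ∀ m j : Fin n, ∑ i, F m i * Finv i j = if m = j then 1 else 0 := by
    intro m j
    have := congrArg (fun M => M m j) hFinv1
    simpa [Matrix.mul_apply, Matrix.one_apply] using this
  have htr2 : ∑ i, ∑ j, Finv i j * F j i = (n:ℝ) := by
    have h1 : ∀ i : Fin n, ∑ j, Finv i j * F j i = 1 := by
      intro i; rw [hd2 i i]; simp
    simp [h1]
  have htr : ∑ i, ∑ j, Finv i j * F i j = (n:ℝ) := by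
    rw [← htr2]
    exact Finset.sum_congr rfl fun i _ => Finset.sum_congr rfl fun j _ => by rw [hF i j]
  intro k
  have t3 : ∑ i, ∑ j, s i * (Finv i j * F k j) = s k := by
    have h1 : ∀ i : Fin n, ∑ j, Finv i j * F k j = if i = k then 1 else 0 := by
      intro i
      rw [← hd2 i k]
      exact Finset.sum_congr rfl fun j _ => by rw [hF k j]
    calc ∑ i, ∑ j, s i * (Finv i j * F k j)
        = ∑ i, s i * (if i = k then 1 else 0) := by
          refine Finset.sum_congr rfl fun i _ => ?_
          rw [← Finset.mul_sum, h1 i]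
      _ = s k := by simp
  have t4 : ∑ i, ∑ j, s j * (Finv i j * F k i) = s k := by
    rw [Finset.sum_comm]
    calc ∑ j, ∑ i, s j * (Finv i j * F k i)
        = ∑ j, s j * (if k = j then 1 else 0) := by
          refine Finset.sum_congr rfl fun j _ => ?_
          rw [← Finset.mul_sum, ← hd1 k j]
          congr 1
          exact Finset.sum_congr rfl fun i _ => by ring
      _ = s k := by simp
  have u1 : ∑ i, ∑ j, (c j + 2 * s j) * (Finv i j * F i k) = c k + 2 * s k := by
    rw [Finset.sum_comm]
    calc ∑ j, ∑ i, (c j + 2 * s j) * (Finv i j * F i k)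
        = ∑ j, (c j + 2 * s j) * (if k = j then 1 else 0) := by
          refine Finset.sum_congr rfl fun j _ => ?_
          rw [← Finset.mul_sum, ← hd1 k j]
          congr 1
          exact Finset.sum_congr rfl fun i _ => by rw [hF i k]; ring
      _ = c k + 2 * s k := by simp
  have u2 : ∑ i, ∑ j, s i * (Finv i j * F j k) = s k := by
    calc ∑ i, ∑ j, s i * (Finv i j * F j k)
        = ∑ i, s i * (if i = k then 1 else 0) := by
          refine Finset.sum_congr rfl fun i _ => ?_
          rw [← Finset.mul_sum, hd2 i k]
      _ = s k := by simp
  have u3 : ∑ i, ∑ j, s k * (Finv i j * F j i) = s k * (n:ℝ) := by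
    calc ∑ i, ∑ j, s k * (Finv i j * F j i)
        = s k * ∑ i, ∑ j, Finv i j * F j i := by
          rw [Finset.mul_sum]
          exact Finset.sum_congr rfl fun i _ => by rw [Finset.mul_sum]
      _ = s k * (n:ℝ) := by rw [htr2]
  constructor
  · have expand : ∑ i, ∑ j, Finv i j * a i j k
        = (∑ i, ∑ j, Finv i j * T i j k) - (c k + 2 * s k) * (∑ i, ∑ j, Finv i j * F i j)
          - (∑ i, ∑ j, s i * (Finv i j * F k j)) - (∑ i, ∑ j, s j * (Finv i j * F k i)) := by
      simp only [Finset.mul_sum, ← Finset.sum_sub_distrib]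
      refine Finset.sum_congr rfl fun i _ => Finset.sum_congr rfl fun j _ => ?_
      rw [ha]; ring
    rw [expand, ← hA, htr, t3, t4, hs, hc]
    field_simp
    ring
  · have expand : ∑ i, ∑ j, Finv i j * a i k j
        = (∑ i, ∑ j, Finv i j * T i k j) - (∑ i, ∑ j, (c j + 2 * s j) * (Finv i j * F i k))
          - (∑ i, ∑ j, s i * (Finv i j * F j k)) - (∑ i, ∑ j, s k * (Finv i j * F j i)) := by
      simp only [Finset.mul_sum, ← Finset.sum_sub_distrib]
      refine Finset.sum_congr rfl fun i _ => Finset.sum_congr rfl fun j _ => ?_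
      rw [ha]; ring
    rw [expand, ← hB, u1, u2, u3, hs, hc]
    field_simp
    ring
end

section
/- Let n ≥ 2, let F = (f_{ij}) be a symmetric invertible real n×n matrix with inverse (f^{ij}), and let T = (T_{ijk}) be a real array with T_{ijk} = T_{jik} for all i, j, k. Define A_k = Σ_{i,j} f^{ij} T_{ijk}, B_k = Σ_{i,j} f^{ij} T_{ikj}, s_k = (A_k − n B_k)/((n+2)(1−n)), c_k = ((n+3) A_k − 2(n+1) B_k)/((n+2)(n−1)), and a_{ijk} = T_{ijk} − (c_k + 2 s_k) f_{ij} − s_i f_{kj} − s_j f_{ki}. Then the following are equivalent: (1) the total symmetrization of a vanishes, i.e. a_{ijk} + a_{jki} + a_{kij} + a_{ikj} + a_{kji} + a_{jik} = 0 for all i, j, k; (2) there exists a vector (φ_k) ∈ ℝⁿ such that T_{ijk} + T_{jki} + T_{kij} + T_{ikj} + T_{kji} + T_{jik} = 2(φ_k f_{ij} + φ_i f_{jk} + φ_j f_{ki}) for all i, j, k. Moreover, in case (2) necessarily φ_k = (A_k + 2 B_k)/(n+2) for all k. -/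
/-- The symmetrized tensor `a_{(ijk)}` vanishes if and only if the first-derivative
array `T_{ijk} = ∂_k f_{ij}` satisfies `∂_{(k}f_{ij)} = φ_{(k}f_{ij)}` for some
covector `φ`; moreover `φ` is then necessarily given by `φ_k = (A_k + 2B_k)/(n+2)`. -/
theorem quadratic_complex_criterion
    {n : ℕ} (hn : 2 ≤ n)
    (F Finv : Matrix (Fin n) (Fin n) ℝ)
    (hFsym : F.IsSymm)
    (hFinv1 : F * Finv = 1) (hFinv2 : Finv * F = 1)
    (T : Fin n → Fin n → Fin n → ℝ)
    (hTsym : ∀ i j k, T i j k = T j i k)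
    (A B s c : Fin n → ℝ)
    (hA : ∀ k, A k = ∑ i, ∑ j, Finv i j * T i j k)
    (hB : ∀ k, B k = ∑ i, ∑ j, Finv i j * T i k j)
    (hs : ∀ k, s k = (A k - (n : ℝ) * B k) / (((n : ℝ) + 2) * (1 - (n : ℝ))))
    (hc : ∀ k, c k = (((n : ℝ) + 3) * A k - 2 * ((n : ℝ) + 1) * B k)
        / (((n : ℝ) + 2) * ((n : ℝ) - 1)))
    (a : Fin n → Fin n → Fin n → ℝ)
    (ha : ∀ i j k, a i j k
        = T i j k - (c k + 2 * s k) * F i j - s i * F k j - s j * F k i) :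
    ((∀ i j k, a i j k + a j k i + a k i j + a i k j + a k j i + a j i k = 0) ↔
      (∃ φ : Fin n → ℝ, ∀ i j k,
        T i j k + T j k i + T k i j + T i k j + T k j i + T j i k
          = 2 * (φ k * F i j + φ i * F j k + φ j * F k i))) ∧
    (∀ φ : Fin n → ℝ,
      (∀ i j k, T i j k + T j k i + T k i j + T i k j + T k j i + T j i k
          = 2 * (φ k * F i j + φ i * F j k + φ j * F k i)) →
      ∀ k, φ k = (A k + 2 * B k) / ((n : ℝ) + 2)) := by
  have hnR : (2 : ℝ) ≤ (n : ℝ) := by exact_mod_cast hn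
  have hn2 : ((n : ℝ) + 2) ≠ 0 := by linarith
  have hn1 : (1 - (n : ℝ)) ≠ 0 := by linarith
  have hn1' : ((n : ℝ) - 1) ≠ 0 := by linarith
  have hFs : ∀ i j, F i j = F j i := fun i j => hFsym.apply j i
  -- symmetry of Finv
  have hFinvT : Finv.transpose = Finv := by
    have h2 : Finv.transpose * F = 1 := by
      have : (F * Finv).transpose = (1 : Matrix (Fin n) (Fin n) ℝ).transpose := by rw [hFinv1]
      rwa [Matrix.transpose_mul, Matrix.transpose_one, hFsym.eq] at this
    calc Finv.transpose = Finv.transpose * (F * Finv) := by rw [hFinv1, mul_one]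
      _ = (Finv.transpose * F) * Finv := by rw [mul_assoc]
      _ = Finv := by rw [h2, one_mul]
  have hFinvs : ∀ i j, Finv i j = Finv j i := by
    intro i j
    have := congrFun (congrFun hFinvT j) i
    simpa [Matrix.transpose_apply] using this
  -- swap lemma
  have hswap : ∀ g : Fin n → Fin n → ℝ,
      (∑ i, ∑ j, Finv i j * g j i) = ∑ i, ∑ j, Finv i j * g i j := by
    intro g
    rw [Finset.sum_comm]
    exact Finset.sum_congr rfl fun i _ => Finset.sum_congr rfl fun j _ => by
      rw [hFinvs j i]
  -- kronecker delta
  have hdel : ∀ i k, (∑ j, Finv i j * F j k) = if i = k then (1 : ℝ) else 0 := by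
    intro i k
    have h := congrFun (congrFun hFinv2 i) k
    rw [Matrix.mul_apply] at h
    rw [h, Matrix.one_apply]
  have htr : (∑ i, ∑ j, Finv i j * F i j) = (n : ℝ) := by
    calc (∑ i, ∑ j, Finv i j * F i j) = ∑ i, ∑ j, Finv i j * F j i := by
          exact Finset.sum_congr rfl fun i _ => Finset.sum_congr rfl fun j _ => by
            rw [hFs i j]
      _ = ∑ i : Fin n, (if i = i then (1 : ℝ) else 0) := by
          exact Finset.sum_congr rfl fun i _ => hdel i i
      _ = (n : ℝ) := by simp
  have hd1 : ∀ (φ : Fin n → ℝ) k, (∑ i, ∑ j, Finv i j * (φ i * F j k)) = φ k := by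
    intro φ k
    calc (∑ i, ∑ j, Finv i j * (φ i * F j k))
        = ∑ i, φ i * ∑ j, Finv i j * F j k := by
          refine Finset.sum_congr rfl fun i _ => ?_
          rw [Finset.mul_sum]
          exact Finset.sum_congr rfl fun j _ => by ring
      _ = ∑ i, φ i * (if i = k then (1 : ℝ) else 0) := by
          exact Finset.sum_congr rfl fun i _ => by rw [hdel i k]
      _ = φ k := by simp
  have hd2 : ∀ (φ : Fin n → ℝ) k, (∑ i, ∑ j, Finv i j * (φ j * F k i)) = φ k := by
    intro φ k
    calc (∑ i, ∑ j, Finv i j * (φ j * F k i))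
        = ∑ i, ∑ j, Finv i j * ((fun a b => φ a * F b k) j i) := by
          refine Finset.sum_congr rfl fun i _ => Finset.sum_congr rfl fun j _ => ?_
          simp only []
          rw [hFs k i]
      _ = ∑ i, ∑ j, Finv i j * ((fun a b => φ a * F b k) i j) := hswap _
      _ = φ k := hd1 φ k
  -- the necessary formula for φ
  have hphi : ∀ φ : Fin n → ℝ,
      (∀ i j k, T i j k + T j k i + T k i j + T i k j + T k j i + T j i k
          = 2 * (φ k * F i j + φ i * F j k + φ j * F k i)) →
      ∀ k, φ k = (A k + 2 * B k) / ((n : ℝ) + 2) := by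
    intro φ hφ k
    have e2 : (∑ i, ∑ j, Finv i j * T k i j) = B k := by
      rw [hB]
      exact Finset.sum_congr rfl fun i _ => Finset.sum_congr rfl fun j _ => by
        rw [hTsym i k j]
    have e3 : (∑ i, ∑ j, Finv i j * T k j i) = B k := by
      rw [← e2]
      exact hswap (fun a b => T k a b)
    have hL : (∑ i, ∑ j, Finv i j *
        (T i j k + T j k i + T k i j + T i k j + T k j i + T j i k))
        = 2 * A k + 4 * B k := by
      calc (∑ i, ∑ j, Finv i j *
            (T i j k + T j k i + T k i j + T i k j + T k j i + T j i k))
          = ∑ i, ∑ j, (2 * (Finv i j * T i j k) + 2 * (Finv i j * T k i j)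
              + 2 * (Finv i j * T k j i)) := by
            refine Finset.sum_congr rfl fun i _ => Finset.sum_congr rfl fun j _ => ?_
            rw [hTsym j k i, hTsym i k j, hTsym j i k]
            ring
        _ = 2 * (∑ i, ∑ j, Finv i j * T i j k) + 2 * (∑ i, ∑ j, Finv i j * T k i j)
              + 2 * (∑ i, ∑ j, Finv i j * T k j i) := by
            simp only [Finset.sum_add_distrib, ← Finset.mul_sum]
        _ = 2 * A k + 4 * B k := by rw [← hA k, e2, e3]; ring
    have hR : (∑ i, ∑ j, Finv i j *
        (2 * (φ k * F i j + φ i * F j k + φ j * F k i)))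
        = 2 * ((n : ℝ) * φ k + 2 * φ k) := by
      calc (∑ i, ∑ j, Finv i j * (2 * (φ k * F i j + φ i * F j k + φ j * F k i)))
          = ∑ i, ∑ j, ((2 * φ k) * (Finv i j * F i j)
              + 2 * (Finv i j * (φ i * F j k)) + 2 * (Finv i j * (φ j * F k i))) := by
            refine Finset.sum_congr rfl fun i _ => Finset.sum_congr rfl fun j _ => ?_
            ring
        _ = (2 * φ k) * (∑ i, ∑ j, Finv i j * F i j)
              + 2 * (∑ i, ∑ j, Finv i j * (φ i * F j k))
              + 2 * (∑ i, ∑ j, Finv i j * (φ j * F k i)) := by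
            simp only [Finset.sum_add_distrib, ← Finset.mul_sum]
        _ = 2 * ((n : ℝ) * φ k + 2 * φ k) := by
            rw [htr, hd1 φ k, hd2 φ k]; ring
    have hEq : 2 * A k + 4 * B k = 2 * ((n : ℝ) * φ k + 2 * φ k) := by
      rw [← hL, ← hR]
      exact Finset.sum_congr rfl fun i _ => Finset.sum_congr rfl fun j _ => by
        rw [hφ i j k]
    rw [eq_div_iff hn2]
    linarith
  -- c + 4s = (A + 2B)/(n+2)
  have hcs : ∀ k, c k + 4 * s k = (A k + 2 * B k) / ((n : ℝ) + 2) := by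
    intro k
    rw [hs, hc]
    field_simp
    ring
  -- symmetrization of a
  have hsymA : ∀ i j k, a i j k + a j k i + a k i j + a i k j + a k j i + a j i k
      = (T i j k + T j k i + T k i j + T i k j + T k j i + T j i k)
        - 2 * ((c k + 4 * s k) * F i j + (c i + 4 * s i) * F j k
          + (c j + 4 * s j) * F k i) := by
    intro i j k
    rw [ha i j k, ha j k i, ha k i j, ha i k j, ha k j i, ha j i k,
      hFs j i, hFs k i, hFs k j]
    ring
  refine ⟨⟨fun h => ?_, fun h => ?_⟩, hphi⟩
  · refine ⟨fun k => c k + 4 * s k, fun i j k => ?_⟩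
    have h1 := hsymA i j k
    have h2 := h i j k
    show T i j k + T j k i + T k i j + T i k j + T k j i + T j i k
      = 2 * ((c k + 4 * s k) * F i j + (c i + 4 * s i) * F j k
        + (c j + 4 * s j) * F k i)
    linarith
  · obtain ⟨φ, hφ⟩ := h
    intro i j k
    rw [hsymA i j k, hφ i j k, hcs i, hcs j, hcs k,
      ← hphi φ hφ i, ← hphi φ hφ j, ← hphi φ hφ k]
    ring
end

section
/- Let p, q, r, P, Q, R : ℝ → ℝ be differentiable functions, and let D ⊆ ℝ³ be an open set such that P(a) ≠ 0, Q(b) ≠ 0 and R(c) ≠ 0 for all (a, b, c) ∈ D. Define on D the functions f(a,b) = (p(a) − q(b))/(P(a)Q(b)), g(a,c) = (r(c) − p(a))/(P(a)R(c)), h(b,c) = (q(b) − r(c))/(Q(b)R(c)). Then at every point of D the following three identities hold (subscripts denoting partial derivatives in the indicated variables): g h f_{ab} = g h_b f_a + g_a h f_b − g_a h_b f; f h g_{ac} = f h_c g_a + f_a h g_c − f_a h_c g; f g h_{bc} = f g_c h_b + f_b g h_c − f_b g_c h. -/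
/-!
Write `sepQuot u v U V x y = (u x - v y) / (U x * V y)`. Up to sign and order of arguments,
`f`, `g`, `h` are the quotients `sepQuot` built from two of the pairs `(p, P)`, `(q, Q)`,
`(r, R)`, and each condition is the single identity `sepQuot_integrability` for a suitable
ordering of the three pairs. Signs do not matter, since every term of a condition contains each
of `f`, `g`, `h` (or one of its derivatives) exactly once. The identity itself follows by
computing the derivatives and clearing denominators.
-/

noncomputable def sepQuot (u v U V : ℝ → ℝ) (x y : ℝ) : ℝ := (u x - v y) / (U x * V y)

theorem sepQuot_swap (u v U V : ℝ → ℝ) (x y : ℝ) :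
    sepQuot v u V U y x = -sepQuot u v U V x y := by
  unfold sepQuot
  rw [← neg_div, neg_sub, mul_comm]

section
variable {u v U V : ℝ → ℝ} {x y : ℝ}

theorem deriv_sepQuot_fst (hu : DifferentiableAt ℝ u x) (hU : DifferentiableAt ℝ U x)
    (hUx : U x ≠ 0) (hVy : V y ≠ 0) :
    deriv (fun x' => sepQuot u v U V x' y) x
      = (deriv u x * U x - (u x - v y) * deriv U x) / (U x ^ 2 * V y) := by
  have hnum := hu.hasDerivAt.sub_const (v y)
  have hden := hU.hasDerivAt.mul_const (V y)
  unfold sepQuot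
  rw [(hnum.fun_div hden (mul_ne_zero hUx hVy)).deriv]
  field_simp

theorem deriv_sepQuot_snd (hv : DifferentiableAt ℝ v y) (hV : DifferentiableAt ℝ V y)
    (hUx : U x ≠ 0) (hVy : V y ≠ 0) :
    deriv (fun y' => sepQuot u v U V x y') y
      = -((deriv v y * V y - (v y - u x) * deriv V y) / (V y ^ 2 * U x)) := by
  simp only [sepQuot_swap v u V U, deriv.fun_neg]
  rw [deriv_sepQuot_fst hv hV hVy hUx]

theorem deriv_deriv_sepQuot (hu : DifferentiableAt ℝ u x) (hU : DifferentiableAt ℝ U x)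
    (hv : DifferentiableAt ℝ v y) (hV : DifferentiableAt ℝ V y) (hUx : U x ≠ 0) (hVy : V y ≠ 0) :
    deriv (fun y' => deriv (fun x' => sepQuot u v U V x' y') x) y
      = (deriv v y * deriv U x * V y
          - (deriv u x * U x - (u x - v y) * deriv U x) * deriv V y) / (U x ^ 2 * V y ^ 2) := by
  have hfst : (fun y' => deriv (fun x' => sepQuot u v U V x' y') x)
      =ᶠ[nhds y] fun y' => (deriv u x * U x - (u x - v y') * deriv U x) / (U x ^ 2 * V y') := by
    filter_upwards [hV.continuousAt.eventually_ne hVy] with y' hVy'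
    exact deriv_sepQuot_fst hu hU hUx hVy'
  have hnum : HasDerivAt (fun y' => deriv u x * U x - (u x - v y') * deriv U x)
      (deriv v y * deriv U x) y := by
    refine (((hv.hasDerivAt.const_sub (u x)).mul_const (deriv U x)).const_sub
      (deriv u x * U x)).congr_deriv ?_
    ring
  have hden := hV.hasDerivAt.const_mul (U x ^ 2)
  rw [hfst.deriv_eq, (hnum.fun_div hden (mul_ne_zero (pow_ne_zero 2 hUx) hVy)).deriv]
  field_simp

end

theorem sepQuot_integrability {u v w U V W : ℝ → ℝ} {x y z : ℝ}
    (hu : DifferentiableAt ℝ u x) (hU : DifferentiableAt ℝ U x)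
    (hv : DifferentiableAt ℝ v y) (hV : DifferentiableAt ℝ V y)
    (hUx : U x ≠ 0) (hVy : V y ≠ 0) (hWz : W z ≠ 0) :
    sepQuot u w U W x z * sepQuot v w V W y z
        * deriv (fun y' => deriv (fun x' => sepQuot u v U V x' y') x) y
      = sepQuot u w U W x z * deriv (fun y' => sepQuot v w V W y' z) y
          * deriv (fun x' => sepQuot u v U V x' y) x
        + deriv (fun x' => sepQuot u w U W x' z) x * sepQuot v w V W y z
          * deriv (fun y' => sepQuot u v U V x y') y
        - deriv (fun x' => sepQuot u w U W x' z) x * deriv (fun y' => sepQuot v w V W y' z) y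
          * sepQuot u v U V x y := by
  rw [deriv_deriv_sepQuot hu hU hv hV hUx hVy, deriv_sepQuot_fst hv hV hVy hWz,
    deriv_sepQuot_fst hu hU hUx hVy, deriv_sepQuot_fst hu hU hUx hWz,
    deriv_sepQuot_snd hv hV hUx hVy]
  unfold sepQuot
  field_simp
  ring

theorem separable_ansatz_satisfies_integrability_conditions_general
    (p q r P Q R : ℝ → ℝ)
    (hp : Differentiable ℝ p) (hq : Differentiable ℝ q) (hr : Differentiable ℝ r)
    (hP : Differentiable ℝ P) (hQ : Differentiable ℝ Q) (hR : Differentiable ℝ R)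
    (D : Set (ℝ × ℝ × ℝ))
    (hPQR : ∀ x ∈ D, P x.1 ≠ 0 ∧ Q x.2.1 ≠ 0 ∧ R x.2.2 ≠ 0)
    (f g h : ℝ → ℝ → ℝ)
    (hf : ∀ a b, f a b = (p a - q b) / (P a * Q b))
    (hg : ∀ a c, g a c = (r c - p a) / (P a * R c))
    (hh : ∀ b c, h b c = (q b - r c) / (Q b * R c)) :
    ∀ a b c : ℝ, (a, b, c) ∈ D →
      (g a c * h b c * deriv (fun b' => deriv (fun a' => f a' b') a) b
        = g a c * deriv (fun b' => h b' c) b * deriv (fun a' => f a' b) a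
          + deriv (fun a' => g a' c) a * h b c * deriv (fun b' => f a b') b
          - deriv (fun a' => g a' c) a * deriv (fun b' => h b' c) b * f a b) ∧
      (f a b * h b c * deriv (fun c' => deriv (fun a' => g a' c') a) c
        = f a b * deriv (fun c' => h b c') c * deriv (fun a' => g a' c) a
          + deriv (fun a' => f a' b) a * h b c * deriv (fun c' => g a c') c
          - deriv (fun a' => f a' b) a * deriv (fun c' => h b c') c * g a c) ∧
      (f a b * g a c * deriv (fun c' => deriv (fun b' => h b' c') b) c
        = f a b * deriv (fun c' => g a c') c * deriv (fun b' => h b' c) b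
          + deriv (fun b' => f a b') b * g a c * deriv (fun c' => h b c') c
          - deriv (fun b' => f a b') b * deriv (fun c' => g a c') c * h b c) := by
  intro a b c habc
  obtain ⟨hPa, hQb, hRc⟩ := hPQR (a, b, c) habc
  obtain rfl : f = sepQuot p q P Q := funext₂ hf
  obtain rfl : h = sepQuot q r Q R := funext₂ hh
  obtain rfl : g = fun a c => sepQuot r p R P c a := funext₂ fun a c => by
    rw [hg, sepQuot, mul_comm]
  refine ⟨?_, ?_, ?_⟩
  · have key := sepQuot_integrability (w := r) (W := R) (hp a) (hP a) (hq b) (hQ b) hPa hQb hRc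
    simp only [sepQuot_swap p r P R, deriv.fun_neg] at key ⊢
    eta_reduce at key ⊢
    linear_combination -key
  · have key := sepQuot_integrability (w := q) (W := Q) (hp a) (hP a) (hr c) (hR c) hPa hRc hQb
    simp only [sepQuot_swap q r Q R, sepQuot_swap p r P R, deriv.fun_neg] at key ⊢
    eta_reduce at key ⊢
    linear_combination key
  · have key := sepQuot_integrability (w := p) (W := P) (hq b) (hQ b) (hr c) (hR c) hQb hRc hPa
    simp only [sepQuot_swap p q P Q, sepQuot_swap p r P R, deriv.fun_neg] at key ⊢
    eta_reduce at key ⊢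
    linear_combination -key

/-- The separable ansatz `f = (p−q)/(PQ)`, `g = (r−p)/(PR)`, `h = (q−r)/(QR)` satisfies
identically the first three integrability conditions (in cleared form)
`g h f_{ab} = g h_b f_a + g_a h f_b − g_a h_b f`,
`f h g_{ac} = f h_c g_a + f_a h g_c − f_a h_c g`,
`f g h_{bc} = f g_c h_b + f_b g h_c − f_b g_c h`. -/
theorem separable_ansatz_satisfies_integrability_conditions
    (p q r P Q R : ℝ → ℝ)
    (hp : Differentiable ℝ p) (hq : Differentiable ℝ q) (hr : Differentiable ℝ r)
    (hP : Differentiable ℝ P) (hQ : Differentiable ℝ Q) (hR : Differentiable ℝ R)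
    (D : Set (ℝ × ℝ × ℝ)) (hD : IsOpen D)
    (hPQR : ∀ x ∈ D, P x.1 ≠ 0 ∧ Q x.2.1 ≠ 0 ∧ R x.2.2 ≠ 0)
    (f g h : ℝ → ℝ → ℝ)
    (hf : ∀ a b, f a b = (p a - q b) / (P a * Q b))
    (hg : ∀ a c, g a c = (r c - p a) / (P a * R c))
    (hh : ∀ b c, h b c = (q b - r c) / (Q b * R c)) :
    ∀ a b c : ℝ, (a, b, c) ∈ D →
      (g a c * h b c * deriv (fun b' => deriv (fun a' => f a' b') a) b
        = g a c * deriv (fun b' => h b' c) b * deriv (fun a' => f a' b) a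
          + deriv (fun a' => g a' c) a * h b c * deriv (fun b' => f a b') b
          - deriv (fun a' => g a' c) a * deriv (fun b' => h b' c) b * f a b) ∧
      (f a b * h b c * deriv (fun c' => deriv (fun a' => g a' c') a) c
        = f a b * deriv (fun c' => h b c') c * deriv (fun a' => g a' c) a
          + deriv (fun a' => f a' b) a * h b c * deriv (fun c' => g a c') c
          - deriv (fun a' => f a' b) a * deriv (fun c' => h b c') c * g a c) ∧
      (f a b * g a c * deriv (fun c' => deriv (fun b' => h b' c') b) c
        = f a b * deriv (fun c' => g a c') c * deriv (fun b' => h b' c) b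
          + deriv (fun b' => f a b') b * g a c * deriv (fun c' => h b c') c
          - deriv (fun b' => f a b') b * deriv (fun c' => g a c') c * h b c) :=
  separable_ansatz_satisfies_integrability_conditions_general p q r P Q R hp hq hr hP hQ hR D hPQR f
    g h hf hg hh
end
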